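/- Let U : ℝⁿ → ℝ be twice continuously differentiable and τ ∈ ℝ. At every point (q,p), the Jacobian matrix S of the leapfrog (Verlet) map Φ^U_τ satisfies det S = 1; consequently Φ^U_τ preserves the 2n-dimensional phase-space volume (Lebesgue measure). -/

import Mathlib

open scoped BigOperators

/-- The gradient `∇U` of a function `U : ℝⁿ → ℝ`, taken componentwise. -/
noncomputable def grad {n : ℕ} (U : (Fin n → ℝ) → ℝ) (q : Fin n → ℝ) : Fin n → ℝ :=
  fun i => fderiv ℝ U q (Pi.single i 1)

/-- The leapfrog (Verlet) map `Φ^U_τ(q,p) = (Q,P)` with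
`p⁺ = p − (τ/2)∇U(q)`, `Q = q + τ p⁺`, `P = p⁺ − (τ/2)∇U(Q)`. -/
noncomputable def leapfrog {n : ℕ} (U : (Fin n → ℝ) → ℝ) (τ : ℝ)
    (z : (Fin n → ℝ) × (Fin n → ℝ)) : (Fin n → ℝ) × (Fin n → ℝ) :=
  let pplus := z.2 - (τ / 2) • grad U z.1
  let Q := z.1 + τ • pplus
  (Q, pplus - (τ / 2) • grad U Q)

/-- The canonical symplectic form `ω((δq,δp),(δq',δp')) = ⟨δq,δp'⟩ − ⟨δq',δp⟩` on ℝⁿ × ℝⁿ. -/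
noncomputable def omegaForm {n : ℕ} (u v : (Fin n → ℝ) × (Fin n → ℝ)) : ℝ :=
  (∑ i, u.1 i * v.2 i) - ∑ i, v.1 i * u.2 i

/-!
The leapfrog map is the composition kick ∘ drift ∘ kick of the two shears
`(q, p) ↦ (q, p + f q)` and `(q, p) ↦ (q + g p, p)`. The Jacobian of a shear is block
unitriangular, so its determinant is 1, and by Fubini a shear preserves Lebesgue measure because
each fibre is moved by a translation.
-/

open MeasureTheory

section LinearAlgebra

variable {R M N : Type*} [CommRing R] [AddCommGroup M] [Module R M] [AddCommGroup N] [Module R N]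
  [Module.Free R M] [Module.Finite R M] [Module.Free R N] [Module.Finite R N]

theorem LinearMap.det_prod_fst_snd_add_comp_fst (A : M →ₗ[R] N) :
    LinearMap.det ((LinearMap.fst R M N).prod (LinearMap.snd R M N + A ∘ₗ LinearMap.fst R M N)) =
      1 := by
  classical
  let bM := Module.Free.chooseBasis R M
  let bN := Module.Free.chooseBasis R N
  have hmatrix : LinearMap.toMatrix (bM.prod bN) (bM.prod bN)
      ((LinearMap.fst R M N).prod (LinearMap.snd R M N + A ∘ₗ LinearMap.fst R M N)) =
      Matrix.fromBlocks 1 0 (LinearMap.toMatrix bM bN A) 1 := by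
    ext (i | i) (j | j) <;>
      simp [LinearMap.toMatrix_apply, Module.Basis.prod_apply, Matrix.one_apply,
        Finsupp.single_apply, eq_comm]
  rw [← LinearMap.det_toMatrix (bM.prod bN), hmatrix, Matrix.det_fromBlocks_zero₁₂]
  simp

end LinearAlgebra

def kick {E F : Type*} [Add F] (f : E → F) (z : E × F) : E × F := (z.1, z.2 + f z.1)

def drift {E F : Type*} [Add E] (g : F → E) (z : E × F) : E × F := (z.1 + g z.2, z.2)

theorem drift_eq_swap_comp_kick_comp_swap {E F : Type*} [Add E] (g : F → E) :
    drift g = Prod.swap ∘ kick g ∘ Prod.swap :=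
  rfl

section Calculus

variable {𝕜 E F : Type*} [NontriviallyNormedField 𝕜] [NormedAddCommGroup E] [NormedSpace 𝕜 E]
  [NormedAddCommGroup F] [NormedSpace 𝕜 F]

theorem hasFDerivAt_kick {f : E → F} {f' : E →L[𝕜] F} {z : E × F} (hf : HasFDerivAt f f' z.1) :
    HasFDerivAt (kick f)
      ((ContinuousLinearMap.fst 𝕜 E F).prod
        (ContinuousLinearMap.snd 𝕜 E F + f'.comp (ContinuousLinearMap.fst 𝕜 E F))) z :=
  hasFDerivAt_fst.prodMk (hasFDerivAt_snd.add (hf.comp z hasFDerivAt_fst))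

theorem DifferentiableAt.kick {f : E → F} {z : E × F} (hf : DifferentiableAt 𝕜 f z.1) :
    DifferentiableAt 𝕜 (kick f) z :=
  (hasFDerivAt_kick hf.hasFDerivAt).differentiableAt

theorem hasFDerivAt_drift {g : F → E} {g' : F →L[𝕜] E} {z : E × F} (hg : HasFDerivAt g g' z.2) :
    HasFDerivAt (drift g)
      ((ContinuousLinearEquiv.prodComm 𝕜 F E : F × E →L[𝕜] E × F).comp
        (((ContinuousLinearMap.fst 𝕜 F E).prod
          (ContinuousLinearMap.snd 𝕜 F E + g'.comp (ContinuousLinearMap.fst 𝕜 F E))).comp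
            (ContinuousLinearEquiv.prodComm 𝕜 E F : E × F →L[𝕜] F × E))) z :=
  (ContinuousLinearEquiv.prodComm 𝕜 F E).hasFDerivAt.comp z
    ((hasFDerivAt_kick (z := z.swap) hg).comp z (ContinuousLinearEquiv.prodComm 𝕜 E F).hasFDerivAt)

theorem DifferentiableAt.drift {g : F → E} {z : E × F} (hg : DifferentiableAt 𝕜 g z.2) :
    DifferentiableAt 𝕜 (drift g) z :=
  (hasFDerivAt_drift hg.hasFDerivAt).differentiableAt

variable [FiniteDimensional 𝕜 E] [FiniteDimensional 𝕜 F]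

theorem det_fderiv_kick {f : E → F} {z : E × F} (hf : DifferentiableAt 𝕜 f z.1) :
    LinearMap.det (fderiv 𝕜 (kick f) z).toLinearMap = 1 := by
  rw [(hasFDerivAt_kick hf.hasFDerivAt).fderiv]
  exact LinearMap.det_prod_fst_snd_add_comp_fst _

theorem det_fderiv_drift {g : F → E} {z : E × F} (hg : DifferentiableAt 𝕜 g z.2) :
    LinearMap.det (fderiv 𝕜 (drift g) z).toLinearMap = 1 := by
  rw [(hasFDerivAt_drift hg.hasFDerivAt).fderiv]
  exact (LinearMap.det_conj _ (LinearEquiv.prodComm 𝕜 F E)).trans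
    (LinearMap.det_prod_fst_snd_add_comp_fst _)

end Calculus

section Measure

variable {E F : Type*} [MeasurableSpace E] [MeasurableSpace F] {μ : Measure E} {ν : Measure F}
  [SFinite μ] [SFinite ν]

theorem measurePreserving_kick [AddGroup F] [MeasurableAdd₂ F] [ν.IsAddRightInvariant]
    {f : E → F} (hf : Measurable f) : MeasurePreserving (kick f) (μ.prod ν) (μ.prod ν) :=
  (MeasurePreserving.id μ).skew_product (g := fun x y => y + f x)
    (measurable_snd.add (hf.comp measurable_fst))
    (ae_of_all _ fun x => (measurePreserving_add_right ν (f x)).map_eq)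

theorem measurePreserving_drift [AddGroup E] [MeasurableAdd₂ E] [μ.IsAddRightInvariant]
    {g : F → E} (hg : Measurable g) : MeasurePreserving (drift g) (μ.prod ν) (μ.prod ν) :=
  Measure.measurePreserving_swap.comp
    ((measurePreserving_kick hg).comp Measure.measurePreserving_swap)

end Measure

theorem differentiable_grad {n : ℕ} {U : (Fin n → ℝ) → ℝ} (hU : ContDiff ℝ 2 U) :
    Differentiable ℝ (grad U) := fun q =>
  differentiableAt_pi.2 fun i =>
    ((hU.fderiv_right (m := 1) (by norm_num)).differentiable one_ne_zero q).clm_apply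
      (differentiableAt_const _)

theorem leapfrog_eq_kick_comp_drift_comp_kick {n : ℕ} (U : (Fin n → ℝ) → ℝ) (τ : ℝ) :
    leapfrog U τ = kick (-(τ / 2) • grad U) ∘ drift (τ • ·) ∘ kick (-(τ / 2) • grad U) := by
  funext z
  simp only [leapfrog, kick, drift, Function.comp, Pi.smul_apply, neg_smul, ← sub_eq_add_neg]

open MeasureTheory in
/-- At every point, the Jacobian of the leapfrog (Verlet) map has determinant 1;
consequently the map preserves the phase-space volume (Lebesgue measure). -/
theorem leapfrog_det_one_volume_preserving {n : ℕ} (U : (Fin n → ℝ) → ℝ)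
    (hU : ContDiff ℝ 2 U) (τ : ℝ) :
    (∀ z : (Fin n → ℝ) × (Fin n → ℝ),
      LinearMap.det ((fderiv ℝ (leapfrog U τ) z).toLinearMap) = 1) ∧
    MeasurePreserving (leapfrog U τ) volume volume := by
  have hforce : Differentiable ℝ (-(τ / 2) • grad U) := (differentiable_grad hU).const_smul _
  have hvelocity : Differentiable ℝ (τ • · : (Fin n → ℝ) → (Fin n → ℝ)) :=
    differentiable_id.const_smul τ
  rw [leapfrog_eq_kick_comp_drift_comp_kick]
  constructor
  · intro z
    have hkick := (hforce z.1).kick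
    have hdrift := DifferentiableAt.drift (hvelocity _) (z := kick (-(τ / 2) • grad U) z)
    rw [fderiv_comp z ((hforce _).kick) (hdrift.comp z hkick), fderiv_comp z hdrift hkick]
    simp only [ContinuousLinearMap.toLinearMap_comp, LinearMap.det_comp,
      det_fderiv_kick (hforce _), det_fderiv_drift (hvelocity _), mul_one]
  · rw [Measure.volume_eq_prod]
    have hkick := measurePreserving_kick (μ := volume) (ν := volume) hforce.continuous.measurable
    exact hkick.comp
      ((measurePreserving_drift (μ := volume) (ν := volume) hvelocity.continuous.measurable).comp
        hkick)
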